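/- For μ a Borel probability measure on [0,1], let m(μ) = ∫₀¹ a dμ(a) and define J(μ, ã) = ã if m(μ) ≤ 1/2 and J(μ, ã) = −ã if m(μ) > 1/2, for ã ∈ [0,1]. Then there is no Borel probability measure μ on [0,1] such that every ã in the topological support of μ satisfies J(μ, ã) = sup_{b ∈ [0,1]} J(μ, b). In particular, the one-step mean-field game of Example 2 admits no relaxed equilibrium. -/

import Mathlib

/-!
Whatever the population does, `b ↦ J(μ, b)` is strictly monotone on `[0,1]`, so its only
maximiser is `1` when `m(μ) ≤ 1/2` and `0` when `m(μ) > 1/2`. In an equilibrium the support,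
which carries all of `μ`, lies in that single point, so `μ` is the Dirac mass there and its mean
is `1` (resp. `0`), contradicting the case we are in.
-/

open Set MeasureTheory
open scoped ENNReal

/-- The topological support of a measure on `ℝ`: the set of points all of whose
neighborhoods have positive measure. -/
def measSupport (μ : Measure ℝ) : Set ℝ := {x | ∀ U ∈ nhds x, μ U ≠ 0}

/-- The mean action `m(μ) = ∫ a dμ(a)` of an action distribution `μ`. -/
noncomputable def meanAction (μ : Measure ℝ) : ℝ := ∫ a, a ∂μ

/-- The discontinuous value of the representative player in Example 2:
`J(μ, b) = b` if `m(μ) ≤ 1/2` and `J(μ, b) = −b` if `m(μ) > 1/2`. -/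
noncomputable def Jex2 (μ : Measure ℝ) (b : ℝ) : ℝ :=
  if meanAction μ ≤ 1/2 then b else -b

lemma measSupport_eq_support (μ : Measure ℝ) : measSupport μ = μ.support := by
  ext x
  simp only [measSupport, mem_ofPred_eq, Measure.mem_support_iff_forall, pos_iff_ne_zero]

lemma ae_mem_measSupport (μ : Measure ℝ) : ∀ᵐ a ∂μ, a ∈ measSupport μ := by
  rw [measSupport_eq_support]
  exact Measure.support_mem_ae

lemma meanAction_eq_of_measSupport_subset_singleton {μ : Measure ℝ} [IsProbabilityMeasure μ]
    {c : ℝ} (h : measSupport μ ⊆ {c}) : meanAction μ = c := by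
  have hc : (fun a : ℝ => a) =ᵐ[μ] fun _ => c := (ae_mem_measSupport μ).mono fun _ ha => h ha
  calc meanAction μ = ∫ _, c ∂μ := integral_congr_ae hc
    _ = c := by simp

lemma iSup_coe_Icc_zero_one : ⨆ b : Icc (0:ℝ) 1, (b : ℝ) = 1 := by
  rw [← sSup_eq_iSup', csSup_Icc zero_le_one]

lemma iSup_neg_coe_Icc_zero_one : ⨆ b : Icc (0:ℝ) 1, -(b : ℝ) = 0 :=
  IsLUB.ciSup_eq (IsGreatest.isLUB
    ⟨⟨⟨0, left_mem_Icc.2 zero_le_one⟩, neg_zero⟩, forall_mem_range.2 fun b => neg_nonpos.2 b.2.1⟩)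

/-- the one-step mean-field game of Example 2 admits no relaxed
equilibrium: there is no Borel probability measure `μ` on `[0,1]` such that every
action in its topological support maximizes `Jex2 μ` over `[0,1]`. -/
theorem stmt7 :
    ¬ ∃ μ : Measure ℝ, IsProbabilityMeasure μ ∧ μ (Icc (0:ℝ) 1) = 1 ∧
      ∀ a ∈ measSupport μ, Jex2 μ a = ⨆ b : Icc (0:ℝ) 1, Jex2 μ b := by
  rintro ⟨μ, hμ, -, hmax⟩
  by_cases hm : meanAction μ ≤ 1/2
  · have hsupp : measSupport μ ⊆ {1} := fun a ha => by
      simpa only [Jex2, if_pos hm, iSup_coe_Icc_zero_one, mem_singleton_iff] using hmax a ha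
    linarith [meanAction_eq_of_measSupport_subset_singleton hsupp]
  · have hsupp : measSupport μ ⊆ {0} := fun a ha => by
      simpa only [Jex2, if_neg hm, iSup_neg_coe_Icc_zero_one, neg_eq_zero, mem_singleton_iff] using hmax a ha
    linarith [meanAction_eq_of_measSupport_subset_singleton hsupp]
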